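/- arXiv:1812.05551 — 6 statements merged into one kernel-verified Lean document; each statement's English description precedes it below -/
import Mathlib

section
/- Let π_α* be an α-optimal policy w.r.t. π₀ (i.e., (1-α)π_α* + α π₀ maximizes v^{(1-α)π' + α π₀} over policies π'). Then for any β ∈ [0, α], the value of the β-mixture dominates the value of the α-mixture: v^{(1-β)π_α* + β π₀} ≥ v^{(1-α)π_α* + α π₀} componentwise. In particular (β = 0), the deterministic policy π_α* itself satisfies v^{π_α*} ≥ v^{π^α(π_α*, π₀)}. -/
open Finset

/-- One-step return for state `s`, action `a`, value `v`. -/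
noncomputable def qOf {S A : Type*} [Fintype S] (γ : ℝ)
    (r : S → A → ℝ) (P : S → A → S → ℝ) (v : S → ℝ) (s : S) (a : A) : ℝ :=
  r s a + γ * ∑ s', P s a s' * v s'

/-- Fixed-policy Bellman operator. -/
noncomputable def Tpol {S A : Type*} [Fintype S] [Fintype A] (γ : ℝ)
    (r : S → A → ℝ) (P : S → A → S → ℝ) (π : S → A → ℝ) (v : S → ℝ) : S → ℝ :=
  fun s => ∑ a, π s a * qOf γ r P v s a

/-- Optimal Bellman operator. -/
noncomputable def Topt {S A : Type*} [Fintype S] [Fintype A] (γ : ℝ)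
    (r : S → A → ℝ) (P : S → A → S → ℝ) (v : S → ℝ) : S → ℝ :=
  fun s => ⨆ a : A, qOf γ r P v s a
/-- Mixture policy `π^c(π₁,π₂) = (1-c)π₁ + c π₂`. -/
noncomputable def mixPol {S A : Type*} (c : ℝ) (π1 π2 : S → A → ℝ) : S → A → ℝ :=
  fun s a => (1 - c) * π1 s a + c * π2 s a
lemma Tpol_sub {S A : Type*} [Fintype S] [Fintype A] (γ : ℝ)
    (r : S → A → ℝ) (P : S → A → S → ℝ) (π : S → A → ℝ) (v w : S → ℝ) (s : S) :
    Tpol γ r P π v s - Tpol γ r P π w s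
      = γ * ∑ a, π s a * ∑ s', P s a s' * (v s' - w s') := by
  simp only [Tpol, qOf, Finset.mul_sum, ← Finset.sum_sub_distrib]
  apply Finset.sum_congr rfl
  intro a _
  rw [mul_add, mul_add, add_sub_add_left_eq_sub, Finset.mul_sum, Finset.mul_sum,
    ← Finset.sum_sub_distrib]
  apply Finset.sum_congr rfl
  intro s' _
  ring

lemma Tpol_mix {S A : Type*} [Fintype S] [Fintype A] (γ c : ℝ)
    (r : S → A → ℝ) (P : S → A → S → ℝ) (π1 π2 : S → A → ℝ) (v : S → ℝ) (s : S) :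
    Tpol γ r P (mixPol c π1 π2) v s
      = (1 - c) * Tpol γ r P π1 v s + c * Tpol γ r P π2 v s := by
  simp only [Tpol, mixPol, Finset.mul_sum, ← Finset.sum_add_distrib]
  apply Finset.sum_congr rfl
  intro a _
  ring

lemma Tpol_diff_ge {S A : Type*} [Fintype S] [Fintype A] (γ : ℝ) (hγ0 : 0 ≤ γ)
    (r : S → A → ℝ) (P : S → A → S → ℝ) (π : S → A → ℝ)
    (hP : ∀ s a, (∀ s', 0 ≤ P s a s') ∧ ∑ s', P s a s' = 1)
    (hπ : ∀ s, (∀ a, 0 ≤ π s a) ∧ ∑ a, π s a = 1)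
    (v w : S → ℝ) (c : ℝ) (h : ∀ s', c ≤ v s' - w s') (s : S) :
    γ * c ≤ Tpol γ r P π v s - Tpol γ r P π w s := by
  rw [Tpol_sub]
  have hinner : ∀ a : A, c ≤ ∑ s', P s a s' * (v s' - w s') := by
    intro a
    calc c = ∑ s', P s a s' * c := by rw [← Finset.sum_mul, (hP s a).2, one_mul]
    _ ≤ _ := Finset.sum_le_sum fun s' _ =>
        mul_le_mul_of_nonneg_left (h s') ((hP s a).1 s')
  have houter : c ≤ ∑ a, π s a * ∑ s', P s a s' * (v s' - w s') := by
    calc c = ∑ a, π s a * c := by rw [← Finset.sum_mul, (hπ s).2, one_mul]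
    _ ≤ _ := Finset.sum_le_sum fun a _ =>
        mul_le_mul_of_nonneg_left (hinner a) ((hπ s).1 a)
  exact mul_le_mul_of_nonneg_left houter hγ0

lemma le_of_fixedPoint {S A : Type*} [Fintype S] [Fintype A] (γ : ℝ)
    (hγ0 : 0 ≤ γ) (hγ1 : γ < 1)
    (r : S → A → ℝ) (P : S → A → S → ℝ) (π : S → A → ℝ)
    (hP : ∀ s a, (∀ s', 0 ≤ P s a s') ∧ ∑ s', P s a s' = 1)
    (hπ : ∀ s, (∀ a, 0 ≤ π s a) ∧ ∑ a, π s a = 1)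
    (v' u : S → ℝ) (hfix : Tpol γ r P π v' = v')
    (hge : ∀ s, u s ≤ Tpol γ r P π u s) : u ≤ v' := by
  rcases isEmpty_or_nonempty S with hS | hS
  · intro s; exact (IsEmpty.false s).elim
  obtain ⟨t, -, hmin⟩ := Finset.exists_min_image Finset.univ
    (fun s => v' s - u s) Finset.univ_nonempty
  set c := v' t - u t with hc
  have hcle : ∀ s', c ≤ v' s' - u s' := fun s' => hmin s' (Finset.mem_univ _)
  have key : γ * c ≤ Tpol γ r P π v' t - Tpol γ r P π u t :=
    Tpol_diff_ge γ hγ0 r P π hP hπ v' u c hcle t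
  have h1 : γ * c ≤ v' t - u t + (Tpol γ r P π u t - u t) * (-1) + (u t - u t) := by
    rw [hfix] at key; linarith
  have hcge : 0 ≤ c := by nlinarith [hge t, h1]
  intro s
  have := hcle s
  linarith

lemma exists_fixedPoint {S A : Type*} [Fintype S] [Fintype A] (γ : ℝ)
    (hγ0 : 0 ≤ γ) (hγ1 : γ < 1)
    (r : S → A → ℝ) (P : S → A → S → ℝ) (π : S → A → ℝ)
    (hP : ∀ s a, (∀ s', 0 ≤ P s a s') ∧ ∑ s', P s a s' = 1)
    (hπ : ∀ s, (∀ a, 0 ≤ π s a) ∧ ∑ a, π s a = 1) :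
    ∃ v : S → ℝ, Tpol γ r P π v = v := by
  set f : (S → ℝ) → (S → ℝ) := Tpol γ r P π with hf
  have hK : (γ.toNNReal : ℝ) = γ := Real.coe_toNNReal γ hγ0
  have hbound : ∀ v w : (S → ℝ), ∀ s, |f v s - f w s| ≤ γ * dist v w := by
    intro v w s
    have hd : ∀ s', -(dist v w) ≤ v s' - w s' ∧ v s' - w s' ≤ dist v w := by
      intro s'
      have h1 : dist (v s') (w s') ≤ dist v w := dist_le_pi_dist v w s'
      rw [Real.dist_eq] at h1
      exact abs_le.mp h1
    have h1 : γ * (-(dist v w)) ≤ f v s - f w s :=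
      Tpol_diff_ge γ hγ0 r P π hP hπ v w _ (fun s' => (hd s').1) s
    have h2 : γ * (-(dist v w)) ≤ f w s - f v s :=
      Tpol_diff_ge γ hγ0 r P π hP hπ w v _ (fun s' => by linarith [(hd s').2]) s
    rw [abs_le]; constructor <;> nlinarith
  have hlip : LipschitzWith γ.toNNReal f := by
    apply LipschitzWith.of_dist_le_mul
    intro v w
    rw [hK]
    rw [dist_pi_le_iff (mul_nonneg hγ0 dist_nonneg)]
    intro s
    rw [Real.dist_eq]
    exact hbound v w s
  have hcon : ContractingWith γ.toNNReal f := by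
    refine ⟨?_, hlip⟩
    rw [← NNReal.coe_lt_coe, hK, NNReal.coe_one]
    exact hγ1
  exact ⟨hcon.fixedPoint f, hcon.fixedPoint_isFixedPt⟩

lemma mix_policy {S A : Type*} [Fintype A] (c : ℝ) (hc0 : 0 ≤ c) (hc1 : c ≤ 1)
    (π1 π2 : S → A → ℝ)
    (h1 : ∀ s, (∀ a, 0 ≤ π1 s a) ∧ ∑ a, π1 s a = 1)
    (h2 : ∀ s, (∀ a, 0 ≤ π2 s a) ∧ ∑ a, π2 s a = 1) :
    ∀ s, (∀ a, 0 ≤ mixPol c π1 π2 s a) ∧ ∑ a, mixPol c π1 π2 s a = 1 := by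
  intro s
  constructor
  · intro a
    exact add_nonneg (mul_nonneg (by linarith) ((h1 s).1 a))
      (mul_nonneg hc0 ((h2 s).1 a))
  · simp only [mixPol, Finset.sum_add_distrib, ← Finset.mul_sum, (h1 s).2, (h2 s).2]
    ring


/-- If `π_α*` is α-optimal w.r.t. `π₀`, then for any `β ∈ [0,α]` the
value of the β-mixture dominates the value of the α-mixture componentwise
(in particular, for β = 0, the deterministic policy `π_α*` itself). -/
theorem mixture_improvement
    {S A : Type*} [Fintype S] [Fintype A] [Nonempty A]
    (γ α β : ℝ) (hγ0 : 0 ≤ γ) (hγ1 : γ < 1)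
    (hα0 : 0 ≤ α) (hα1 : α < 1) (hβ0 : 0 ≤ β) (hβα : β ≤ α)
    (r : S → A → ℝ) (P : S → A → S → ℝ) (π0 πα : S → A → ℝ)
    (hP : ∀ s a, (∀ s', 0 ≤ P s a s') ∧ ∑ s', P s a s' = 1)
    (hπ0 : ∀ s, (∀ a, 0 ≤ π0 s a) ∧ ∑ a, π0 s a = 1)
    (hπα : ∀ s, (∀ a, 0 ≤ πα s a) ∧ ∑ a, πα s a = 1)
    (vα vβ : S → ℝ)
    (hvα : Tpol γ r P (mixPol α πα π0) vα = vα)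
    (hvβ : Tpol γ r P (mixPol β πα π0) vβ = vβ)
    (hopt : ∀ π' : S → A → ℝ, (∀ s, (∀ a, 0 ≤ π' s a) ∧ ∑ a, π' s a = 1) →
      ∀ v' : S → ℝ, Tpol γ r P (mixPol α π' π0) v' = v' → v' ≤ vα) :
    vα ≤ vβ := by
  classical
  -- key improvement inequality: πα beats π0 at vα
  have key : ∀ s, Tpol γ r P π0 vα s ≤ Tpol γ r P πα vα s := by
    by_contra h
    push_neg at h
    obtain ⟨s0, hs0⟩ := h
    set π' : S → A → ℝ := fun s a => if s = s0 then π0 s a else πα s a with hπ'def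
    have hπ' : ∀ s, (∀ a, 0 ≤ π' s a) ∧ ∑ a, π' s a = 1 := by
      intro s
      by_cases h : s = s0
      · simpa only [hπ'def, if_pos h] using (h ▸ hπ0 s0 : _)
      · simpa only [hπ'def, if_neg h] using hπα s
    have hmix : ∀ s, (∀ a, 0 ≤ mixPol α π' π0 s a) ∧ ∑ a, mixPol α π' π0 s a = 1 :=
      mix_policy α hα0 hα1.le π' π0 hπ' hπ0
    obtain ⟨v', hv'⟩ := exists_fixedPoint γ hγ0 hγ1 r P (mixPol α π' π0) hP hmix
    have hle : v' ≤ vα := hopt π' hπ' v' hv'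
    have hT's0 : Tpol γ r P π' vα s0 = Tpol γ r P π0 vα s0 := by
      simp only [Tpol]
      exact Finset.sum_congr rfl fun a _ => by simp [π']
    have hv0 : ∀ s, vα s = (1 - α) * Tpol γ r P πα vα s + α * Tpol γ r P π0 vα s := by
      intro s
      rw [← congrFun hvα s, Tpol_mix]
    have hstrict : vα s0 < Tpol γ r P (mixPol α π' π0) vα s0 := by
      rw [Tpol_mix, hT's0, hv0 s0]
      have := mul_lt_mul_of_pos_left hs0 (show (0:ℝ) < 1 - α by linarith)
      linarith
    have hge : ∀ s, vα s ≤ Tpol γ r P (mixPol α π' π0) vα s := by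
      intro s
      by_cases h : s = s0
      · subst h; exact hstrict.le
      · have hT's : Tpol γ r P π' vα s = Tpol γ r P πα vα s := by
          simp only [Tpol]
          exact Finset.sum_congr rfl fun a _ => by simp [π', h]
        rw [Tpol_mix, hT's, ← hv0 s]
    have hαle : vα ≤ v' :=
      le_of_fixedPoint γ hγ0 hγ1 r P (mixPol α π' π0) hP hmix v' vα hv' hge
    have hmono : Tpol γ r P (mixPol α π' π0) vα s0 ≤ Tpol γ r P (mixPol α π' π0) v' s0 := by
      have := Tpol_diff_ge γ hγ0 r P (mixPol α π' π0) hP hmix v' vα 0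
        (fun s' => by linarith [hαle s']) s0
      linarith
    have h1 := hle s0
    have h2 := congrFun hv' s0
    linarith
  -- now compare vα with vβ
  have hmixβ : ∀ s, (∀ a, 0 ≤ mixPol β πα π0 s a) ∧ ∑ a, mixPol β πα π0 s a = 1 :=
    mix_policy β hβ0 (by linarith) πα π0 hπα hπ0
  have hgeβ : ∀ s, vα s ≤ Tpol γ r P (mixPol β πα π0) vα s := by
    intro s
    rw [Tpol_mix]
    have hv := congrFun hvα s
    rw [Tpol_mix] at hv
    nlinarith [mul_nonneg (sub_nonneg.mpr hβα) (sub_nonneg.mpr (key s))]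
  exact le_of_fixedPoint γ hγ0 hγ1 r P (mixPol β πα π0) hP hmixβ vβ vα hvβ hgeβ
end

section
/- For any policy π₀ and α ∈ [0,1), the α-optimal value dominates the value of π₀: v^{π₀} ≤ v^{π^α(π_α*,π₀)} componentwise, with equality everywhere if and only if π₀ is an optimal policy of the MDP. -/
/-!
Both Bellman operators are monotone and satisfy `T (w + M) ≤ T w + γ M` for constants `M`.
For `γ < 1` this gives a comparison principle (a subsolution `x ≤ T x` lies below every
fixed point) and, through Banach's theorem, fixed points.

Taking `π' = π₀` in the α-optimality gives `v^{π₀} ≤ v_α`, and comparison with the optimal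
operator `T` gives `v_α ≤ v*`. If `v^{π₀}` is not a fixed point of `T`, mixing a greedy policy
for `v^{π₀}` into `π₀` gives a policy `μ` with `T^μ v^{π₀} = (1-α) T v^{π₀} + α v^{π₀}`, which
is `≥ v^{π₀}` and strictly larger somewhere; by comparison `v^μ` strictly exceeds `v^{π₀}`
there, so `v^{π₀} ≠ v_α`.
-/

open Finset

section ShiftContracting

variable {S : Type*}

def ShiftContracting (γ : ℝ) (T : (S → ℝ) → S → ℝ) : Prop :=
  ∀ v w : S → ℝ, ∀ M : ℝ, (∀ s, v s - w s ≤ M) → ∀ s, T v s ≤ T w s + γ * M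

namespace ShiftContracting

variable {γ : ℝ} {T : (S → ℝ) → S → ℝ}

theorem monotone (hT : ShiftContracting γ T) : Monotone T := fun v w hvw s => by
  simpa using hT v w 0 (fun s => sub_nonpos.2 (hvw s)) s

theorem le_of_le_apply [Finite S] (hT : ShiftContracting γ T) (hγ1 : γ < 1) {x y : S → ℝ}
    (hx : x ≤ T x) (hy : T y = y) : x ≤ y := by
  rcases isEmpty_or_nonempty S with hS | hS
  · exact fun s => isEmptyElim s
  obtain ⟨s₀, hs₀⟩ := Finite.exists_max fun s => x s - y s
  have hM : x s₀ - y s₀ ≤ γ * (x s₀ - y s₀) := by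
    have := hT x y _ hs₀ s₀
    rw [hy] at this
    linarith [hx s₀]
  have hM0 : x s₀ - y s₀ ≤ 0 := by nlinarith
  exact fun s => by linarith [hs₀ s]

theorem lt_of_lt_apply [Finite S] (hT : ShiftContracting γ T) (hγ1 : γ < 1) {x y : S → ℝ}
    (hx : x ≤ T x) (hy : T y = y) {s : S} (hs : x s < T x s) : x s < y s :=
  calc x s < T x s := hs
    _ ≤ T y s := hT.monotone (hT.le_of_le_apply hγ1 hx hy) s
    _ = y s := by rw [hy]

theorem lipschitzWith [Fintype S] (hT : ShiftContracting γ T) (hγ0 : 0 ≤ γ) :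
    LipschitzWith ⟨γ, hγ0⟩ T := by
  refine LipschitzWith.of_dist_le_mul fun v w => ?_
  refine (dist_pi_le_iff (mul_nonneg hγ0 dist_nonneg)).2 fun s => ?_
  have hd : ∀ s', |v s' - w s'| ≤ dist v w := fun s' => by
    simpa only [Real.dist_eq] using dist_le_pi_dist v w s'
  rw [Real.dist_eq, abs_sub_le_iff]
  exact ⟨by linarith [hT v w _ (fun s' => (abs_sub_le_iff.1 (hd s')).1) s],
    by linarith [hT w v _ (fun s' => (abs_sub_le_iff.1 (hd s')).2) s]⟩

theorem exists_fixedPoint [Fintype S] (hT : ShiftContracting γ T) (hγ0 : 0 ≤ γ) (hγ1 : γ < 1) :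
    ∃ v, T v = v :=
  have hC : ContractingWith ⟨γ, hγ0⟩ T := ⟨hγ1, hT.lipschitzWith hγ0⟩
  ⟨_, hC.fixedPoint_isFixedPt (f := T)⟩

end ShiftContracting

end ShiftContracting

theorem sum_mul_le_sum_mul_add {ι : Type*} [Fintype ι] {p f g : ι → ℝ} {c : ℝ}
    (hp : p ∈ stdSimplex ℝ ι) (hfg : ∀ i, f i ≤ g i + c) :
    ∑ i, p i * f i ≤ ∑ i, p i * g i + c :=
  calc ∑ i, p i * f i ≤ ∑ i, p i * (g i + c) :=
        sum_le_sum fun i _ => mul_le_mul_of_nonneg_left (hfg i) (hp.1 i)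
    _ = ∑ i, p i * g i + c := by
        simp only [mul_add, sum_add_distrib, ← sum_mul, hp.2, one_mul]

section Policy

variable {S A : Type*}

theorem mixPol_mem_stdSimplex [Fintype A] {c : ℝ} (hc0 : 0 ≤ c) (hc1 : c ≤ 1) {π₁ π₂ : S → A → ℝ}
    (hπ₁ : ∀ s, π₁ s ∈ stdSimplex ℝ A) (hπ₂ : ∀ s, π₂ s ∈ stdSimplex ℝ A) (s : S) :
    mixPol c π₁ π₂ s ∈ stdSimplex ℝ A :=
  convex_stdSimplex ℝ A (hπ₁ s) (hπ₂ s) (sub_nonneg.2 hc1) hc0 (sub_add_cancel 1 c)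

theorem mixPol_self (c : ℝ) (π : S → A → ℝ) : mixPol c π π = π := by
  funext s a; simp only [mixPol]; ring

end Policy

section Bellman

variable {S A : Type*} [Fintype S] {γ : ℝ} {r : S → A → ℝ}
  {P : S → A → S → ℝ}

theorem qOf_le_add (hγ0 : 0 ≤ γ) (hP : ∀ s a, P s a ∈ stdSimplex ℝ S) {v w : S → ℝ}
    {M : ℝ} (hM : ∀ s, v s - w s ≤ M) (s : S) (a : A) :
    qOf γ r P v s a ≤ qOf γ r P w s a + γ * M := by
  have := sum_mul_le_sum_mul_add (hP s a) (f := v) (g := w) (c := M) fun s => by linarith [hM s]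
  unfold qOf
  nlinarith

theorem shiftContracting_Tpol [Fintype A] (hγ0 : 0 ≤ γ) (hP : ∀ s a, P s a ∈ stdSimplex ℝ S)
    {π : S → A → ℝ} (hπ : ∀ s, π s ∈ stdSimplex ℝ A) :
    ShiftContracting γ (Tpol γ r P π) := fun _ _ _ hM s =>
  sum_mul_le_sum_mul_add (hπ s) (qOf_le_add hγ0 hP hM s)

theorem shiftContracting_Topt [Fintype A] [Nonempty A] (hγ0 : 0 ≤ γ)
    (hP : ∀ s a, P s a ∈ stdSimplex ℝ S) :
    ShiftContracting γ (Topt (A := A) γ r P) := fun _ _ _ hM s =>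
  ciSup_le fun a => (qOf_le_add hγ0 hP hM s a).trans <|
    add_le_add_left (le_ciSup (Set.finite_range _).bddAbove a) _

theorem le_Topt_of_Tpol_eq [Fintype A] {π : S → A → ℝ} (hπ : ∀ s, π s ∈ stdSimplex ℝ A) {v : S → ℝ}
    (hv : Tpol γ r P π v = v) : v ≤ Topt γ r P v := fun s =>
  calc v s = ∑ a, π s a * qOf γ r P v s a := (congrFun hv s).symm
    _ ≤ ∑ a, π s a * 0 + Topt γ r P v s := sum_mul_le_sum_mul_add (hπ s)
        fun a => by rw [zero_add]; exact le_ciSup (Set.finite_range (qOf γ r P v s ·)).bddAbove a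
    _ = Topt γ r P v s := by simp

theorem exists_Tpol_eq_Topt [Fintype A] [Nonempty A] (v : S → ℝ) :
    ∃ π : S → A → ℝ, (∀ s, π s ∈ stdSimplex ℝ A) ∧ Tpol γ r P π v = Topt γ r P v := by
  classical
  choose g hg using fun s => Finite.exists_max (qOf γ r P v s)
  refine ⟨fun s => Pi.single (g s) 1, fun s => single_mem_stdSimplex ℝ (g s), ?_⟩
  funext s
  simp only [Tpol, Topt, Pi.single_apply, ite_mul, one_mul, zero_mul, sum_ite_eq',
    mem_univ, if_true]
  exact le_antisymm (le_ciSup (Set.finite_range _).bddAbove _) (ciSup_le (hg s))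

theorem Tpol_mixPol [Fintype A] (c : ℝ) (π₁ π₂ : S → A → ℝ) (v : S → ℝ) (s : S) :
    Tpol γ r P (mixPol c π₁ π₂) v s = (1 - c) * Tpol γ r P π₁ v s + c * Tpol γ r P π₂ v s := by
  simp only [Tpol, mixPol, add_mul, sum_add_distrib, mul_sum, mul_assoc]

theorem exists_mixPol_improvement [Fintype A] [Nonempty A] (hγ0 : 0 ≤ γ) (hγ1 : γ < 1) {α : ℝ}
    (hα0 : 0 ≤ α) (hα1 : α < 1) (hP : ∀ s a, P s a ∈ stdSimplex ℝ S) {π₀ : S → A → ℝ}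
    (hπ₀ : ∀ s, π₀ s ∈ stdSimplex ℝ A) {v₀ : S → ℝ} (hv₀ : Tpol γ r P π₀ v₀ = v₀)
    {s₀ : S} (hs₀ : v₀ s₀ < Topt γ r P v₀ s₀) :
    ∃ π : S → A → ℝ, (∀ s, π s ∈ stdSimplex ℝ A) ∧
      ∃ v, Tpol γ r P (mixPol α π π₀) v = v ∧ v₀ s₀ < v s₀ := by
  obtain ⟨πg, hπg, hgreedy⟩ := exists_Tpol_eq_Topt (γ := γ) (r := r) (P := P) v₀
  have hT := shiftContracting_Tpol (r := r) hγ0 hP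
    (mixPol_mem_stdSimplex hα0 hα1.le hπg hπ₀)
  obtain ⟨v, hv⟩ := hT.exists_fixedPoint hγ0 hγ1
  have hmix : ∀ s, Tpol γ r P (mixPol α πg π₀) v₀ s
      = v₀ s + (1 - α) * (Topt γ r P v₀ s - v₀ s) := fun s => by
    rw [Tpol_mixPol, hgreedy, hv₀]; ring
  have hv₀_le := le_Topt_of_Tpol_eq hπ₀ hv₀
  refine ⟨πg, hπg, v, hv, hT.lt_of_lt_apply hγ1 (fun s => ?_) hv ?_⟩
  · rw [hmix]; nlinarith [hv₀_le s]
  · rw [hmix]; nlinarith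

end Bellman

/-- For any base policy π₀ and α ∈ [0,1), the α-optimal value
dominates the value of π₀ componentwise: `v^{π₀} ≤ v^{π^α(π_α*,π₀)}`, with
equality everywhere iff π₀ is an optimal policy of the MDP. -/
theorem alpha_optimal_dominates_base
    {S A : Type*} [Fintype S] [Fintype A] [Nonempty A]
    (γ α : ℝ) (hγ0 : 0 ≤ γ) (hγ1 : γ < 1) (hα0 : 0 ≤ α) (hα1 : α < 1)
    (r : S → A → ℝ) (P : S → A → S → ℝ) (π0 πα : S → A → ℝ)
    (hP : ∀ s a, (∀ s', 0 ≤ P s a s') ∧ ∑ s', P s a s' = 1)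
    (hπ0 : ∀ s, (∀ a, 0 ≤ π0 s a) ∧ ∑ a, π0 s a = 1)
    (hπα : ∀ s, (∀ a, 0 ≤ πα s a) ∧ ∑ a, πα s a = 1)
    (v0 vα vstar : S → ℝ)
    (hv0 : Tpol γ r P π0 v0 = v0)
    (hvα : Tpol γ r P (mixPol α πα π0) vα = vα)
    (hopt : ∀ π' : S → A → ℝ, (∀ s, (∀ a, 0 ≤ π' s a) ∧ ∑ a, π' s a = 1) →
      ∀ v' : S → ℝ, Tpol γ r P (mixPol α π' π0) v' = v' → v' ≤ vα)
    (hstar : Topt γ r P vstar = vstar) :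
    v0 ≤ vα ∧ (v0 = vα ↔ v0 = vstar) := by
  have hTopt := shiftContracting_Topt (A := A) (r := r) hγ0 hP
  have hv0α : v0 ≤ vα := hopt π0 hπ0 v0 (by rw [mixPol_self, hv0])
  have hvαstar : vα ≤ vstar := hTopt.le_of_le_apply hγ1
    (le_Topt_of_Tpol_eq (mixPol_mem_stdSimplex hα0 hα1.le hπα hπ0) hvα) hstar
  refine ⟨hv0α, fun h0α => ?_, fun h0star => le_antisymm hv0α (h0star ▸ hvαstar)⟩
  have hgreedy : Topt γ r P v0 = v0 := by
    refine le_antisymm (fun s => not_lt.1 fun hs => ?_) (le_Topt_of_Tpol_eq hπ0 hv0)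
    obtain ⟨π, hπ, v, hv, hlt⟩ := exists_mixPol_improvement hγ0 hγ1 hα0 hα1 hP hπ0 hv0 hs
    exact (hopt π hπ v hv s).not_gt (h0α ▸ hlt)
  exact le_antisymm (hTopt.le_of_le_apply hγ1 hgreedy.ge hstar)
    (hTopt.le_of_le_apply hγ1 hstar.ge hgreedy)
end

section
/- Define the Lipschitz constant L = max_s (v*(s) - T^{π₀}v*(s)). Then L ≥ 0 and the bias of the α-optimal value satisfies ‖v* - v*_α‖_∞ ≤ αL/(1-γ), where v*_α is the fixed point of T_α = (1-α)T + α T^{π₀}. -/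
open Finset

/-!
Both Bellman operators are `γ`-contractions for the sup norm, hence so is their convex
combination `T_α`. Since `v*` is fixed by `T`, its defect under `T_α` is
`v* - T_α v* = α (v* - T^{π₀} v*)`, which lies between `0` and `α L` because `T^{π₀} v* ≤ T v* = v*`.
The a priori estimate for contractions, `d(x, fix f) ≤ d(x, f x) / (1 - γ)`, concludes.
-/

theorem dist_weightedSum_le {ι : Type*} [Fintype ι] {p f g : ι → ℝ} {c : ℝ}
    (hp0 : ∀ i, 0 ≤ p i) (hp1 : ∑ i, p i = 1) (h : ∀ i, dist (f i) (g i) ≤ c) :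
    dist (∑ i, p i * f i) (∑ i, p i * g i) ≤ c :=
  calc dist (∑ i, p i * f i) (∑ i, p i * g i) = |∑ i, p i * (f i - g i)| := by
        simp only [Real.dist_eq, mul_sub, sum_sub_distrib]
    _ ≤ ∑ i, |p i * (f i - g i)| := abs_sum_le_sum_abs _ _
    _ ≤ ∑ i, p i * c := by
        gcongr with i
        rw [abs_mul, abs_of_nonneg (hp0 i), ← Real.dist_eq]
        exact mul_le_mul_of_nonneg_left (h i) (hp0 i)
    _ = c := by rw [← sum_mul, hp1, one_mul]

theorem ciSup_le_ciSup_add {ι : Type*} [Finite ι] [Nonempty ι] {f g : ι → ℝ} {c : ℝ}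
    (h : ∀ i, f i ≤ g i + c) : ⨆ i, f i ≤ (⨆ i, g i) + c :=
  ciSup_le fun i => (h i).trans <| by gcongr; exact le_ciSup (Set.finite_range g).bddAbove i

theorem dist_ciSup_ciSup_le {ι : Type*} [Finite ι] [Nonempty ι] {f g : ι → ℝ} {c : ℝ}
    (h : ∀ i, dist (f i) (g i) ≤ c) : dist (⨆ i, f i) (⨆ i, g i) ≤ c := by
  simp only [Real.dist_eq, abs_sub_le_iff] at h ⊢
  constructor
  · linarith [ciSup_le_ciSup_add (f := f) (g := g) (c := c) fun i => by linarith [(h i).1]]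
  · linarith [ciSup_le_ciSup_add (f := g) (g := f) (c := c) fun i => by linarith [(h i).2]]

section Bellman

variable {S A : Type*} [Fintype S] {γ : ℝ} {r : S → A → ℝ} {P : S → A → S → ℝ}

theorem dist_qOf_le (hγ : 0 ≤ γ) (hP : ∀ s a, (∀ s', 0 ≤ P s a s') ∧ ∑ s', P s a s' = 1)
    (v w : S → ℝ) (s : S) (a : A) : dist (qOf γ r P v s a) (qOf γ r P w s a) ≤ γ * dist v w := by
  rw [qOf, qOf, dist_add_left, Real.dist_eq, ← mul_sub, abs_mul, abs_of_nonneg hγ, ← Real.dist_eq]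
  exact mul_le_mul_of_nonneg_left
    (dist_weightedSum_le (hP s a).1 (hP s a).2 fun s' => dist_le_pi_dist v w s') hγ

variable [Fintype A]

theorem dist_Tpol_le (hγ : 0 ≤ γ) (hP : ∀ s a, (∀ s', 0 ≤ P s a s') ∧ ∑ s', P s a s' = 1)
    {π : S → A → ℝ} (hπ : ∀ s, (∀ a, 0 ≤ π s a) ∧ ∑ a, π s a = 1) (v w : S → ℝ) (s : S) :
    dist (Tpol γ r P π v s) (Tpol γ r P π w s) ≤ γ * dist v w :=
  dist_weightedSum_le (hπ s).1 (hπ s).2 fun a => dist_qOf_le hγ hP v w s a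

theorem dist_Topt_le [Nonempty A] (hγ : 0 ≤ γ)
    (hP : ∀ s a, (∀ s', 0 ≤ P s a s') ∧ ∑ s', P s a s' = 1) (v w : S → ℝ) (s : S) :
    dist (Topt γ r P v s) (Topt γ r P w s) ≤ γ * dist v w :=
  dist_ciSup_ciSup_le fun a => dist_qOf_le hγ hP v w s a

theorem Tpol_le_Topt {π : S → A → ℝ} (hπ : ∀ s, (∀ a, 0 ≤ π s a) ∧ ∑ a, π s a = 1)
    (v : S → ℝ) (s : S) : Tpol γ r P π v s ≤ Topt γ r P v s :=
  calc Tpol γ r P π v s ≤ ∑ a, π s a * Topt γ r P v s := by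
        unfold Tpol
        gcongr with a
        · exact (hπ s).1 a
        · exact le_ciSup (Set.finite_range _).bddAbove a
    _ = Topt γ r P v s := by rw [← sum_mul, (hπ s).2, one_mul]

/-- `T_α = (1 - α) T + α T^{π}`. -/
noncomputable def Tmix (γ : ℝ) (r : S → A → ℝ) (P : S → A → S → ℝ) (π : S → A → ℝ) (α : ℝ)
    (v : S → ℝ) : S → ℝ :=
  fun s => (1 - α) * Topt γ r P v s + α * Tpol γ r P π v s

theorem dist_Tmix_le [Nonempty A] (hγ : 0 ≤ γ)
    (hP : ∀ s a, (∀ s', 0 ≤ P s a s') ∧ ∑ s', P s a s' = 1)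
    {π : S → A → ℝ} (hπ : ∀ s, (∀ a, 0 ≤ π s a) ∧ ∑ a, π s a = 1)
    {α : ℝ} (hα : α ∈ Set.Icc (0 : ℝ) 1) (v w : S → ℝ) :
    dist (Tmix γ r P π α v) (Tmix γ r P π α w) ≤ γ * dist v w := by
  refine (dist_pi_le_iff (by positivity)).2 fun s => ?_
  calc dist (Tmix γ r P π α v s) (Tmix γ r P π α w s)
      ≤ dist ((1 - α) * Topt γ r P v s) ((1 - α) * Topt γ r P w s)
        + dist (α * Tpol γ r P π v s) (α * Tpol γ r P π w s) := dist_add_add_le _ _ _ _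
    _ ≤ (1 - α) * (γ * dist v w) + α * (γ * dist v w) := by
        simp only [Real.dist_eq, ← mul_sub, abs_mul, abs_of_nonneg hα.1,
          abs_of_nonneg (sub_nonneg.2 hα.2)]
        simp only [← Real.dist_eq]
        gcongr
        · exact sub_nonneg.2 hα.2
        · exact dist_Topt_le hγ hP v w s
        · exact hα.1
        · exact dist_Tpol_le hγ hP hπ v w s
    _ = γ * dist v w := by ring

theorem sub_Tpol_nonneg_of_Topt_eq {π : S → A → ℝ}
    (hπ : ∀ s, (∀ a, 0 ≤ π s a) ∧ ∑ a, π s a = 1) {v : S → ℝ} (hv : Topt γ r P v = v) (s : S) :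
    0 ≤ v s - Tpol γ r P π v s :=
  sub_nonneg.2 <| congrFun hv s ▸ Tpol_le_Topt hπ v s

theorem dist_Tmix_self_le {π : S → A → ℝ} (hπ : ∀ s, (∀ a, 0 ≤ π s a) ∧ ∑ a, π s a = 1)
    {α : ℝ} (hα : 0 ≤ α) {v : S → ℝ} (hv : Topt γ r P v = v) :
    dist v (Tmix γ r P π α v) ≤ α * ⨆ s, (v s - Tpol γ r P π v s) := by
  have hgap := sub_Tpol_nonneg_of_Topt_eq hπ hv
  refine (dist_pi_le_iff (mul_nonneg hα (Real.iSup_nonneg hgap))).2 fun s => ?_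
  have hdefect : v s - Tmix γ r P π α v s = α * (v s - Tpol γ r P π v s) := by
    rw [Tmix, congrFun hv s]; ring
  rw [Real.dist_eq, hdefect, abs_of_nonneg (mul_nonneg hα (hgap s))]
  exact mul_le_mul_of_nonneg_left (le_ciSup (Set.finite_range fun i => v i - Tpol γ r P π v i).bddAbove s) hα

end Bellman

theorem bias_bound_general
    {S A : Type*} [Fintype S] [Fintype A] [Nonempty A]
    (γ α : ℝ) (hγ0 : 0 ≤ γ) (hγ1 : γ < 1) (hα : α ∈ Set.Icc (0 : ℝ) 1)
    (r : S → A → ℝ) (P : S → A → S → ℝ) (π0 : S → A → ℝ)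
    (hP : ∀ s a, (∀ s', 0 ≤ P s a s') ∧ ∑ s', P s a s' = 1)
    (hπ0 : ∀ s, (∀ a, 0 ≤ π0 s a) ∧ ∑ a, π0 s a = 1)
    (vstar vα : S → ℝ)
    (hstar : Topt γ r P vstar = vstar)
    (hvα : (fun s => (1 - α) * Topt γ r P vα s + α * Tpol γ r P π0 vα s) = vα)
    (L : ℝ) (hL : L = ⨆ s : S, (vstar s - Tpol γ r P π0 vstar s)) :
    0 ≤ L ∧ ‖vstar - vα‖ ≤ α * L / (1 - γ) := by
  refine ⟨hL ▸ Real.iSup_nonneg (sub_Tpol_nonneg_of_Topt_eq hπ0 hstar), ?_⟩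
  have hcontr : ContractingWith ⟨γ, hγ0⟩ (Tmix γ r P π0 α) :=
    ⟨hγ1, LipschitzWith.of_dist_le_mul (dist_Tmix_le hγ0 hP hπ0 hα)⟩
  calc ‖vstar - vα‖ = dist vstar vα := (dist_eq_norm _ _).symm
    _ ≤ dist vstar (Tmix γ r P π0 α vstar) / (1 - γ) := hcontr.dist_le_of_fixedPoint vstar hvα
    _ ≤ α * L / (1 - γ) :=
        hL ▸ div_le_div_of_nonneg_right (dist_Tmix_self_le hπ0 hα.1 hstar) (by linarith)

/-- With `L = max_s (v*(s) - T^{π₀}v*(s))`, we have `L ≥ 0` and the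
bias of the α-optimal value satisfies `‖v* - v*_α‖ ≤ αL/(1-γ)`, where `v*_α` is
the fixed point of `T_α = (1-α)T + α T^{π₀}`. -/
theorem bias_bound
    {S A : Type*} [Fintype S] [Fintype A] [Nonempty S] [Nonempty A]
    (γ α : ℝ) (hγ0 : 0 ≤ γ) (hγ1 : γ < 1) (hα : α ∈ Set.Icc (0 : ℝ) 1)
    (r : S → A → ℝ) (P : S → A → S → ℝ) (π0 : S → A → ℝ)
    (hP : ∀ s a, (∀ s', 0 ≤ P s a s') ∧ ∑ s', P s a s' = 1)
    (hπ0 : ∀ s, (∀ a, 0 ≤ π0 s a) ∧ ∑ a, π0 s a = 1)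
    (vstar vα : S → ℝ)
    (hstar : Topt γ r P vstar = vstar)
    (hvα : (fun s => (1 - α) * Topt γ r P vα s + α * Tpol γ r P π0 vα s) = vα)
    (L : ℝ) (hL : L = ⨆ s : S, (vstar s - Tpol γ r P π0 vstar s)) :
    0 ≤ L ∧ ‖vstar - vα‖ ≤ α * L / (1 - γ) :=
  bias_bound_general γ α hγ0 hγ1 hα r P π0 hP hπ0 vstar vα hstar hvα L hL
end

section
/- (Sensitivity bound) Let v*_σ be the fixed point of an optimal Bellman-type operator T_σ = max over a parameterized policy class of fixed-policy Bellman operators, and let v̂ satisfy ‖v*_σ - v̂‖_∞ = δ. Let π̂ be greedy for v̂ (T^{π̂} v̂ = T_σ v̂) and π*_σ greedy for v*_σ. Then ‖v*_σ - v^{π̂}‖_∞ ≤ γ δ ‖π*_σ - π̂‖_TV / (1-γ), where ‖π*_σ - π̂‖_TV = max_s Σ_a |π*_σ(a|s) - π̂(a|s)|. -/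
/-!
Write `d = π*_σ - π̂`. Since `π̂` is greedy for `v̂`, `∑ₐ d(a) q_{v̂}(a) = T^{π*} v̂ - T^{π̂} v̂ ≤ 0`,
so the advantage `v*_σ - T^{π̂} v*_σ = ∑ₐ d(a) q_{v*}(a)` is at most `∑ₐ d(a) (q_{v*} - q_{v̂})(a)`,
hence at most `γ δ ‖d‖_TV`; it is nonnegative because `T^{π̂} ≤ T_σ`. As `T^{π̂}` is a
`γ`-contraction with fixed point `v^{π̂}`, the a posteriori estimate of the Banach fixed point
theorem gives `‖v*_σ - v^{π̂}‖ ≤ ‖v*_σ - T^{π̂} v*_σ‖ / (1 - γ)`.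
-/

open Finset

section Stochastic

variable {ι : Type*} [Fintype ι]

lemma abs_sum_mul_le_sum_abs_mul (d w : ι → ℝ) {C : ℝ} (hw : ∀ i, |w i| ≤ C) :
    |∑ i, d i * w i| ≤ (∑ i, |d i|) * C :=
  calc |∑ i, d i * w i| ≤ ∑ i, |d i| * |w i| := by
        simpa only [abs_mul] using abs_sum_le_sum_abs (fun i => d i * w i) univ
    _ ≤ ∑ i, |d i| * C := sum_le_sum fun i _ => mul_le_mul_of_nonneg_left (hw i) (abs_nonneg _)
    _ = (∑ i, |d i|) * C := (sum_mul ..).symm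

lemma abs_sum_mul_le_of_stochastic {p w : ι → ℝ} {C : ℝ}
    (hp : (∀ i, 0 ≤ p i) ∧ ∑ i, p i = 1) (hw : ∀ i, |w i| ≤ C) :
    |∑ i, p i * w i| ≤ C := by
  simpa only [abs_of_nonneg (hp.1 _), hp.2, one_mul] using abs_sum_mul_le_sum_abs_mul p w hw

end Stochastic

section Bellman

variable {S A : Type*} [Fintype S] {γ : ℝ} (r : S → A → ℝ) (P : S → A → S → ℝ)

lemma qOf_sub_qOf (u v : S → ℝ) (s : S) (a : A) :
    qOf γ r P u s a - qOf γ r P v s a = γ * ∑ s', P s a s' * (u - v) s' := by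
  simp only [qOf, Pi.sub_apply, mul_sub, sum_sub_distrib]
  ring

lemma abs_qOf_sub_qOf_le (hγ : 0 ≤ γ) {s : S} {a : A}
    (hP : (∀ s', 0 ≤ P s a s') ∧ ∑ s', P s a s' = 1) (u v : S → ℝ) :
    |qOf γ r P u s a - qOf γ r P v s a| ≤ γ * ‖u - v‖ := by
  rw [qOf_sub_qOf, abs_mul, abs_of_nonneg hγ]
  refine mul_le_mul_of_nonneg_left (abs_sum_mul_le_of_stochastic hP fun s' => ?_) hγ
  simpa only [Real.norm_eq_abs] using norm_le_pi_norm (u - v) s'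

variable [Fintype A]

lemma Tpol_sub_Tpol_of_policy (π π' : S → A → ℝ) (v : S → ℝ) (s : S) :
    Tpol γ r P π v s - Tpol γ r P π' v s = ∑ a, (π s a - π' s a) * qOf γ r P v s a := by
  simp only [Tpol, ← sum_sub_distrib, sub_mul]

lemma Tpol_sub_Tpol_of_value (π : S → A → ℝ) (u v : S → ℝ) (s : S) :
    Tpol γ r P π u s - Tpol γ r P π v s
      = ∑ a, π s a * (qOf γ r P u s a - qOf γ r P v s a) := by
  simp only [Tpol, ← sum_sub_distrib, mul_sub]

lemma lipschitzWith_Tpol (hγ : 0 ≤ γ) (hP : ∀ s a, (∀ s', 0 ≤ P s a s') ∧ ∑ s', P s a s' = 1)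
    {π : S → A → ℝ} (hπ : ∀ s, (∀ a, 0 ≤ π s a) ∧ ∑ a, π s a = 1) :
    LipschitzWith ⟨γ, hγ⟩ (Tpol γ r P π) := by
  refine LipschitzWith.of_dist_le_mul fun u v => ?_
  rw [dist_eq_norm, dist_eq_norm]
  refine (pi_norm_le_iff_of_nonneg (by positivity)).2 fun s => ?_
  rw [Real.norm_eq_abs, Pi.sub_apply, Tpol_sub_Tpol_of_value]
  exact abs_sum_mul_le_of_stochastic (hπ s) fun a => abs_qOf_sub_qOf_le r P hγ (hP s a) u v

lemma Tpol_sub_Tpol_le_of_le (hγ : 0 ≤ γ)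
    (hP : ∀ s a, (∀ s', 0 ≤ P s a s') ∧ ∑ s', P s a s' = 1) {π π' : S → A → ℝ}
    {u v : S → ℝ} {s : S} (hle : Tpol γ r P π v s ≤ Tpol γ r P π' v s) :
    Tpol γ r P π u s - Tpol γ r P π' u s ≤ (∑ a, |π s a - π' s a|) * (γ * ‖u - v‖) := by
  have hsplit : Tpol γ r P π u s - Tpol γ r P π' u s
      = ∑ a, (π s a - π' s a) * (qOf γ r P u s a - qOf γ r P v s a)
        + (Tpol γ r P π v s - Tpol γ r P π' v s) := by
    simp only [Tpol_sub_Tpol_of_policy, mul_sub, sum_sub_distrib]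
    ring
  have hq := abs_sum_mul_le_sum_abs_mul (fun a => π s a - π' s a) _
    fun a => abs_qOf_sub_qOf_le r P hγ (hP s a) u v
  rw [hsplit]
  linarith [le_abs_self (∑ a, (π s a - π' s a) * (qOf γ r P u s a - qOf γ r P v s a))]

end Bellman

theorem generalized_sensitivity_bound_general
    {S A : Type*} [Fintype S] [Fintype A]
    (γ δ : ℝ) (hγ0 : 0 ≤ γ) (hγ1 : γ < 1)
    (r : S → A → ℝ) (P : S → A → S → ℝ) (πstar πhat : S → A → ℝ)
    (hP : ∀ s a, (∀ s', 0 ≤ P s a s') ∧ ∑ s', P s a s' = 1)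
    (hπhat : ∀ s, (∀ a, 0 ≤ πhat s a) ∧ ∑ a, πhat s a = 1)
    (Tσ : (S → ℝ) → (S → ℝ))
    (hdomstar : ∀ v : S → ℝ, Tpol γ r P πstar v ≤ Tσ v)
    (hdomhat : ∀ v : S → ℝ, Tpol γ r P πhat v ≤ Tσ v)
    (vstar vhat vπhat : S → ℝ)
    (hfix : Tσ vstar = vstar)
    (hgreedystar : Tpol γ r P πstar vstar = Tσ vstar)
    (hgreedyhat : Tpol γ r P πhat vhat = Tσ vhat)
    (hvπhat : Tpol γ r P πhat vπhat = vπhat)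
    (hδ : ‖vstar - vhat‖ = δ)
    (TV : ℝ) (hTV : TV = ⨆ s : S, ∑ a, |πstar s a - πhat s a|) :
    ‖vstar - vπhat‖ ≤ γ * δ * TV / (1 - γ) := by
  subst hδ
  have hTVs (s : S) : ∑ a, |πstar s a - πhat s a| ≤ TV :=
    hTV ▸ le_ciSup (Finite.bddAbove_range fun s => ∑ a, |πstar s a - πhat s a|) s
  have hTV0 : 0 ≤ TV := hTV ▸ Real.iSup_nonneg fun s => sum_nonneg fun a _ => abs_nonneg _
  have hadvantage : ‖vstar - Tpol γ r P πhat vstar‖ ≤ γ * ‖vstar - vhat‖ * TV := by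
    refine (pi_norm_le_iff_of_nonneg (by positivity)).2 fun s => ?_
    have hupper := Tpol_sub_Tpol_le_of_le r P hγ0 hP (u := vstar) (hgreedyhat ▸ hdomstar vhat s)
    have hlower := hdomhat vstar s
    rw [hgreedystar, hfix] at hupper
    rw [hfix] at hlower
    have hTV_mul := mul_le_mul_of_nonneg_right (hTVs s) (by positivity : 0 ≤ γ * ‖vstar - vhat‖)
    rw [Real.norm_eq_abs, Pi.sub_apply, abs_of_nonneg (sub_nonneg.2 hlower)]
    linarith
  have hcontracting : ContractingWith ⟨γ, hγ0⟩ (Tpol γ r P πhat) :=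
    ⟨hγ1, lipschitzWith_Tpol r P hγ0 hP hπhat⟩
  calc ‖vstar - vπhat‖ ≤ dist vstar (Tpol γ r P πhat vstar) / (1 - γ) := by
        rw [← dist_eq_norm]
        exact hcontracting.dist_le_of_fixedPoint vstar hvπhat
    _ ≤ γ * ‖vstar - vhat‖ * TV / (1 - γ) := by
        rw [dist_eq_norm]
        gcongr

/-- Generalized sensitivity bound. If `v̂` approximates the fixed
point `v*_σ` of the optimal operator `T_σ` (sup over a policy class) up to `δ`,
π̂ is greedy for `v̂` and `π*_σ` is greedy for `v*_σ` (both in the class, so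
`T^π ≤ T_σ` and `T_σ` is a γ-contraction), then
`‖v*_σ - v^{π̂}‖ ≤ γ δ ‖π*_σ - π̂‖_TV / (1-γ)`. -/
theorem generalized_sensitivity_bound
    {S A : Type*} [Fintype S] [Fintype A] [Nonempty S] [Nonempty A]
    (γ δ : ℝ) (hγ0 : 0 ≤ γ) (hγ1 : γ < 1)
    (r : S → A → ℝ) (P : S → A → S → ℝ) (πstar πhat : S → A → ℝ)
    (hP : ∀ s a, (∀ s', 0 ≤ P s a s') ∧ ∑ s', P s a s' = 1)
    (hπstar : ∀ s, (∀ a, 0 ≤ πstar s a) ∧ ∑ a, πstar s a = 1)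
    (hπhat : ∀ s, (∀ a, 0 ≤ πhat s a) ∧ ∑ a, πhat s a = 1)
    (Tσ : (S → ℝ) → (S → ℝ))
    (hdomstar : ∀ v : S → ℝ, Tpol γ r P πstar v ≤ Tσ v)
    (hdomhat : ∀ v : S → ℝ, Tpol γ r P πhat v ≤ Tσ v)
    (hcontr : ∀ u v : S → ℝ, ‖Tσ u - Tσ v‖ ≤ γ * ‖u - v‖)
    (vstar vhat vπhat : S → ℝ)
    (hfix : Tσ vstar = vstar)
    (hgreedystar : Tpol γ r P πstar vstar = Tσ vstar)
    (hgreedyhat : Tpol γ r P πhat vhat = Tσ vhat)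
    (hvπhat : Tpol γ r P πhat vπhat = vπhat)
    (hδ : ‖vstar - vhat‖ = δ)
    (TV : ℝ) (hTV : TV = ⨆ s : S, ∑ a, |πstar s a - πhat s a|) :
    ‖vstar - vπhat‖ ≤ γ * δ * TV / (1 - γ) :=
  generalized_sensitivity_bound_general γ δ hγ0 hγ1 r P πstar πhat hP hπhat Tσ hdomstar hdomhat
    vstar vhat vπhat hfix hgreedystar hgreedyhat hvπhat hδ TV hTV
end

section
/- The expected α-optimal q-function satisfies the fixed-point equation q(s,a) = r(s,a) + γ(1-α)Σ_{s'}P(s'|s,a) max_{a'} q(s',a') + γα Σ_{s',a'} P(s'|s,a) π₀(a'|s') q(s',a'), and the operator T^{Eq}_α defined by the right-hand side is a γ-contraction in the sup norm on ℝ^{S×A}. -/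
open Finset

/-- The expected α-optimal Bellman q-operator `T^{Eq}_α`. -/
noncomputable def TEq {S A : Type*} [Fintype S] [Fintype A] (γ α : ℝ)
    (r : S → A → ℝ) (P : S → A → S → ℝ) (π0 : S → A → ℝ)
    (q : S → A → ℝ) : S → A → ℝ := fun s a =>
  r s a + γ * (1 - α) * ∑ s', P s a s' * (⨆ a' : A, q s' a')
        + γ * α * ∑ s', P s a s' * ∑ a', π0 s' a' * q s' a'

/-! `T^{Eq}_α q` is the one-step return of the state values
`s ↦ (1-α) max_a q(s,a) + α Σ_a π₀(a|s) q(s,a)`. Applied to the one-step return of `v`, these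
state values are `T_α v`, so the fixed point of `T_α` yields a fixed point of `T^{Eq}_α`. The
one-step return is `γ`-Lipschitz in the sup norm because `P(·|s,a)` is a probability vector, and
the state values are nonexpansive in `q`, being a convex combination of a maximum and a
`π₀`-average. -/

section Averages

variable {ι : Type*}

lemma ciSup_sub_ciSup_le [Finite ι] [Nonempty ι] {f g : ι → ℝ} {C : ℝ}
    (h : ∀ i, f i - g i ≤ C) : (⨆ i, f i) - ⨆ i, g i ≤ C :=
  sub_le_iff_le_add.2 <| ciSup_le fun i =>
    (sub_le_iff_le_add.1 (h i)).trans (add_le_add_right (le_ciSup (Finite.bddAbove_range g) i) C)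

lemma abs_ciSup_sub_ciSup_le [Finite ι] [Nonempty ι] {f g : ι → ℝ} {C : ℝ}
    (h : ∀ i, |f i - g i| ≤ C) : |(⨆ i, f i) - ⨆ i, g i| ≤ C :=
  abs_sub_le_iff.2 ⟨ciSup_sub_ciSup_le fun i => (abs_sub_le_iff.1 (h i)).1,
    ciSup_sub_ciSup_le fun i => (abs_sub_le_iff.1 (h i)).2⟩

lemma abs_sum_mul_sub_sum_mul_le [Fintype ι] {w x y : ι → ℝ} {C : ℝ}
    (hw0 : ∀ i, 0 ≤ w i) (hw1 : ∑ i, w i = 1) (h : ∀ i, |x i - y i| ≤ C) :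
    |∑ i, w i * x i - ∑ i, w i * y i| ≤ C :=
  calc |∑ i, w i * x i - ∑ i, w i * y i|
      = |∑ i, w i * (x i - y i)| := by simp only [mul_sub, sum_sub_distrib]
    _ ≤ ∑ i, w i * |x i - y i| := by
        simpa only [abs_mul, abs_of_nonneg (hw0 _)] using
          abs_sum_le_sum_abs (fun i => w i * (x i - y i)) univ
    _ ≤ ∑ i, w i * C := sum_le_sum fun i _ => mul_le_mul_of_nonneg_left (h i) (hw0 i)
    _ = C := by rw [← sum_mul, hw1, one_mul]

end Averages

section Bellman

variable {S A : Type*} [Fintype S] [Fintype A]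

lemma abs_sub_le_norm_sub (q₁ q₂ : S → A → ℝ) (s : S) (a : A) :
    |q₁ s a - q₂ s a| ≤ ‖q₁ - q₂‖ :=
  calc |q₁ s a - q₂ s a| = ‖(q₁ - q₂) s a‖ := rfl
    _ ≤ ‖(q₁ - q₂) s‖ := norm_le_pi_norm _ a
    _ ≤ ‖q₁ - q₂‖ := norm_le_pi_norm _ s

lemma norm_le_of_forall_abs_le {q : S → A → ℝ} {C : ℝ} (hC : 0 ≤ C)
    (h : ∀ s a, |q s a| ≤ C) : ‖q‖ ≤ C :=
  (pi_norm_le_iff_of_nonneg hC).2 fun s => (pi_norm_le_iff_of_nonneg hC).2 (h s)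

noncomputable def mixedValue (α : ℝ) (π0 : S → A → ℝ) (q : S → A → ℝ) : S → ℝ :=
  fun s => (1 - α) * (⨆ a, q s a) + α * ∑ a, π0 s a * q s a

lemma TEq_eq_qOf_mixedValue (γ α : ℝ) (r : S → A → ℝ) (P : S → A → S → ℝ)
    (π0 : S → A → ℝ) (q : S → A → ℝ) :
    TEq γ α r P π0 q = qOf γ r P (mixedValue α π0 q) := by
  funext s a
  simp only [TEq, qOf, mixedValue, mul_add, sum_add_distrib, mul_left_comm (P s a _), ← mul_sum]
  ring

lemma mixedValue_qOf (γ α : ℝ) (r : S → A → ℝ) (P : S → A → S → ℝ) (π0 : S → A → ℝ)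
    (v : S → ℝ) :
    mixedValue α π0 (qOf γ r P v) = fun s => (1 - α) * Topt γ r P v s + α * Tpol γ r P π0 v s :=
  rfl

lemma norm_qOf_sub_le {γ : ℝ} (hγ : 0 ≤ γ) (r : S → A → ℝ) {P : S → A → S → ℝ}
    (hP : ∀ s a, (∀ s', 0 ≤ P s a s') ∧ ∑ s', P s a s' = 1) (v₁ v₂ : S → ℝ) :
    ‖qOf γ r P v₁ - qOf γ r P v₂‖ ≤ γ * ‖v₁ - v₂‖ := by
  refine norm_le_of_forall_abs_le (by positivity) fun s a => ?_
  have hv : ∀ s', |v₁ s' - v₂ s'| ≤ ‖v₁ - v₂‖ := fun s' => norm_le_pi_norm (v₁ - v₂) s'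
  calc |qOf γ r P v₁ s a - qOf γ r P v₂ s a|
      = γ * |∑ s', P s a s' * v₁ s' - ∑ s', P s a s' * v₂ s'| := by
        simp only [qOf, add_sub_add_left_eq_sub, ← mul_sub, abs_mul, abs_of_nonneg hγ]
    _ ≤ γ * ‖v₁ - v₂‖ :=
        mul_le_mul_of_nonneg_left (abs_sum_mul_sub_sum_mul_le (hP s a).1 (hP s a).2 hv) hγ

lemma norm_mixedValue_sub_le [Nonempty A] {α : ℝ} (hα : α ∈ Set.Icc (0 : ℝ) 1)
    {π0 : S → A → ℝ} (hπ0 : ∀ s, (∀ a, 0 ≤ π0 s a) ∧ ∑ a, π0 s a = 1) (q₁ q₂ : S → A → ℝ) :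
    ‖mixedValue α π0 q₁ - mixedValue α π0 q₂‖ ≤ ‖q₁ - q₂‖ := by
  obtain ⟨hα0, hα1⟩ := hα
  refine (pi_norm_le_iff_of_nonneg (norm_nonneg _)).2 fun s => ?_
  have hq := abs_sub_le_norm_sub q₁ q₂ s
  have hmax := abs_ciSup_sub_ciSup_le hq
  have havg := abs_sum_mul_sub_sum_mul_le (hπ0 s).1 (hπ0 s).2 hq
  calc |mixedValue α π0 q₁ s - mixedValue α π0 q₂ s|
      = |(1 - α) * ((⨆ a, q₁ s a) - ⨆ a, q₂ s a)
          + α * (∑ a, π0 s a * q₁ s a - ∑ a, π0 s a * q₂ s a)| := by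
        congr 1
        simp only [mixedValue]
        ring
    _ ≤ (1 - α) * ‖q₁ - q₂‖ + α * ‖q₁ - q₂‖ := by
        refine (abs_add_le _ _).trans (add_le_add ?_ ?_) <;>
          rw [abs_mul, abs_of_nonneg (by linarith)] <;> gcongr
    _ = ‖q₁ - q₂‖ := by ring

end Bellman

theorem TEq_fixed_point_and_contraction_general
    {S A : Type*} [Fintype S] [Fintype A] [Nonempty A]
    (γ α : ℝ) (hγ0 : 0 ≤ γ) (hα : α ∈ Set.Icc (0 : ℝ) 1)
    (r : S → A → ℝ) (P : S → A → S → ℝ) (π0 : S → A → ℝ)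
    (hP : ∀ s a, (∀ s', 0 ≤ P s a s') ∧ ∑ s', P s a s' = 1)
    (hπ0 : ∀ s, (∀ a, 0 ≤ π0 s a) ∧ ∑ a, π0 s a = 1)
    (vα : S → ℝ)
    (hvα : (fun s => (1 - α) * Topt γ r P vα s + α * Tpol γ r P π0 vα s) = vα)
    (qE : S → A → ℝ)
    (hqE : ∀ s a, qE s a = r s a + γ * ∑ s', P s a s' * vα s') :
    TEq γ α r P π0 qE = qE ∧
      ∀ q1 q2 : S → A → ℝ,
        ‖TEq γ α r P π0 q1 - TEq γ α r P π0 q2‖ ≤ γ * ‖q1 - q2‖ := by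
  have hqE_eq : qE = qOf γ r P vα := funext fun s => funext (hqE s)
  refine ⟨?_, fun q₁ q₂ => ?_⟩
  · rw [TEq_eq_qOf_mixedValue, hqE_eq, mixedValue_qOf, hvα]
  · simp only [TEq_eq_qOf_mixedValue]
    exact (norm_qOf_sub_le hγ0 r hP _ _).trans
      (mul_le_mul_of_nonneg_left (norm_mixedValue_sub_le hα hπ0 q₁ q₂) hγ0)

/-- The expected α-optimal q-function
`q^E(s,a) = r(s,a) + γ Σ_{s'} P(s'|s,a) v*_α(s')` satisfies the fixed-point
equation `T^{Eq}_α q^E = q^E`, and `T^{Eq}_α` is a γ-contraction in the sup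
norm on `ℝ^{S×A}`. -/
theorem TEq_fixed_point_and_contraction
    {S A : Type*} [Fintype S] [Fintype A] [Nonempty S] [Nonempty A]
    (γ α : ℝ) (hγ0 : 0 ≤ γ) (hγ1 : γ < 1) (hα : α ∈ Set.Icc (0 : ℝ) 1)
    (r : S → A → ℝ) (P : S → A → S → ℝ) (π0 : S → A → ℝ)
    (hP : ∀ s a, (∀ s', 0 ≤ P s a s') ∧ ∑ s', P s a s' = 1)
    (hπ0 : ∀ s, (∀ a, 0 ≤ π0 s a) ∧ ∑ a, π0 s a = 1)
    (vα : S → ℝ)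
    (hvα : (fun s => (1 - α) * Topt γ r P vα s + α * Tpol γ r P π0 vα s) = vα)
    (qE : S → A → ℝ)
    (hqE : ∀ s a, qE s a = r s a + γ * ∑ s', P s a s' * vα s') :
    TEq γ α r P π0 qE = qE ∧
      ∀ q1 q2 : S → A → ℝ,
        ‖TEq γ α r P π0 q1 - TEq γ α r P π0 q2‖ ≤ γ * ‖q1 - q2‖ :=
  TEq_fixed_point_and_contraction_general γ α hγ0 hα r P π0 hP hπ0 vα hvα qE hqE
end

section
/- There exists a one-state MDP and σ > 0 such that decreasing the noise of the σ-optimal Gaussian policy strictly hurts performance: the expected reward of the σ-optimal Gaussian policy exceeds the reward of deterministically playing its mean. Concretely, for reward r(u) = (1/2)(1/√π)e^{-(u-1)²} + (1/2)(1/√π)e^{-(u+1)²} and σ = 1, the σ-optimal mean is μ* = 0, the Gaussian policy N(0,1) achieves expected reward (1/√(3π))e^{-1/3} > 0.23, while the deterministic action u = 0 gives reward (1/√π)e^{-1} < 0.21. -/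
open MeasureTheory ProbabilityTheory

/-- The two-bump reward `r(u) = (1/2)(1/√π)e^{-(u-1)²} + (1/2)(1/√π)e^{-(u+1)²}`. -/
noncomputable def twoBump : ℝ → ℝ := fun u =>
  (1 / 2) * (1 / Real.sqrt Real.pi) * Real.exp (-(u - 1) ^ 2)
    + (1 / 2) * (1 / Real.sqrt Real.pi) * Real.exp (-(u + 1) ^ 2)

open Real in
lemma gauss_conv (a μ : ℝ) :
    ∫ u, Real.exp (-(u - a) ^ 2) ∂(gaussianReal μ 1)
      = (Real.sqrt 3)⁻¹ * Real.exp (-(μ - a) ^ 2 / 3) := by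
  rw [gaussianReal_of_var_ne_zero μ one_ne_zero]
  have hd : gaussianPDF μ 1 = fun x => ((Real.toNNReal (gaussianPDFReal μ 1 x) : NNReal) : ENNReal) :=
    rfl
  rw [hd, integral_withDensity_eq_integral_smul
    ((measurable_gaussianPDFReal μ 1).real_toNNReal) _]
  have hpdf : ∀ x : ℝ, (Real.toNNReal (gaussianPDFReal μ 1 x) : NNReal) • Real.exp (-(x - a) ^ 2)
      = ((Real.sqrt (2 * π))⁻¹ * Real.exp (-(μ - a) ^ 2 / 3))
          * Real.exp (-(3 / 2) * (x - (μ + 2 * a) / 3) ^ 2) := by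
    intro x
    rw [NNReal.smul_def, smul_eq_mul, Real.coe_toNNReal _ (gaussianPDFReal_nonneg μ 1 x)]
    simp only [gaussianPDFReal, NNReal.coe_one, mul_one]
    rw [mul_assoc, mul_assoc, ← Real.exp_add, ← Real.exp_add]
    congr 1
    ring
  simp_rw [hpdf]
  rw [integral_const_mul, integral_sub_right_eq_self (fun x => Real.exp (-(3/2) * x ^ 2))
    ((μ + 2 * a) / 3), integral_gaussian]
  have h3 : Real.sqrt (π / (3 / 2)) = Real.sqrt (2 * π) * (Real.sqrt 3)⁻¹ := by
    rw [← Real.sqrt_inv, ← Real.sqrt_mul (by positivity)]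
    congr 1
    ring
  have h2 : (0:ℝ) < Real.sqrt (2 * π) := Real.sqrt_pos.2 (by positivity)
  rw [h3]
  field_simp

open Real in
lemma twoBump_integral (μ : ℝ) :
    ∫ u, twoBump u ∂(gaussianReal μ 1)
      = 1 / (2 * Real.sqrt π) * ((Real.sqrt 3)⁻¹
          * (Real.exp (-(μ - 1) ^ 2 / 3) + Real.exp (-(μ + 1) ^ 2 / 3))) := by
  have hint : ∀ a : ℝ, Integrable (fun u => Real.exp (-(u - a) ^ 2)) (gaussianReal μ 1) := by
    intro a
    refine (integrable_const (1 : ℝ)).mono' ?_ ?_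
    · exact (Real.continuous_exp.comp (by continuity)).aestronglyMeasurable
    · filter_upwards with u
      rw [Real.norm_eq_abs, abs_of_pos (Real.exp_pos _), Real.exp_le_one_iff]
      simp [neg_nonpos, sq_nonneg]
  have e1 : ∀ u : ℝ, twoBump u
      = (1 / 2) * (1 / Real.sqrt π) * Real.exp (-(u - 1) ^ 2)
        + (1 / 2) * (1 / Real.sqrt π) * Real.exp (-(u - (-1)) ^ 2) := by
    intro u
    have : u - (-1) = u + 1 := by ring
    rw [this]; rfl
  simp_rw [e1]
  rw [integral_add ((hint 1).const_mul _) ((hint (-1)).const_mul _),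
    integral_const_mul, integral_const_mul, gauss_conv, gauss_conv]
  have h : μ - (-1) = μ + 1 := by ring
  rw [h]
  ring

/-- In the one-state MDP with reward `twoBump` and σ = 1, the
σ-optimal Gaussian mean is μ* = 0, the Gaussian policy N(0,1) achieves expected
reward `(1/√(3π))e^{-1/3} > 0.23`, while the deterministic action u = 0 gives
reward `(1/√π)e^{-1} < 0.21`; hence decreasing the noise of the σ-optimal
policy strictly hurts performance. -/
theorem no_improvement_continuous :
    (∀ μ : ℝ, ∫ u, twoBump u ∂(gaussianReal μ 1) ≤ ∫ u, twoBump u ∂(gaussianReal 0 1)) ∧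
    (∫ u, twoBump u ∂(gaussianReal 0 1))
      = 1 / Real.sqrt (3 * Real.pi) * Real.exp (-(1 / 3)) ∧
    (0.23 : ℝ) < 1 / Real.sqrt (3 * Real.pi) * Real.exp (-(1 / 3)) ∧
    twoBump 0 = 1 / Real.sqrt Real.pi * Real.exp (-1) ∧
    twoBump 0 < (0.21 : ℝ) ∧
    twoBump 0 < ∫ u, twoBump u ∂(gaussianReal 0 1) := by
  have hpi : (0:ℝ) < Real.pi := Real.pi_pos
  have hval : (∫ u, twoBump u ∂(gaussianReal 0 1))
      = 1 / Real.sqrt (3 * Real.pi) * Real.exp (-(1 / 3)) := by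
    rw [twoBump_integral]
    have h1 : -((0:ℝ) - 1) ^ 2 / 3 = -(1/3) := by norm_num
    have h2 : -((0:ℝ) + 1) ^ 2 / 3 = -(1/3) := by norm_num
    rw [h1, h2, Real.sqrt_mul (by norm_num : (0:ℝ) ≤ 3)]
    have h3 : (0:ℝ) < Real.sqrt 3 := Real.sqrt_pos.2 (by norm_num)
    have h4 : (0:ℝ) < Real.sqrt Real.pi := Real.sqrt_pos.2 hpi
    field_simp
    ring
  have hopt : ∀ μ : ℝ, ∫ u, twoBump u ∂(gaussianReal μ 1) ≤ ∫ u, twoBump u ∂(gaussianReal 0 1) := by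
    intro μ
    rw [twoBump_integral, twoBump_integral]
    have key : Real.exp (-(μ - 1) ^ 2 / 3) + Real.exp (-(μ + 1) ^ 2 / 3)
        ≤ Real.exp (-((0:ℝ) - 1) ^ 2 / 3) + Real.exp (-((0:ℝ) + 1) ^ 2 / 3) := by
      have hsplit : Real.exp (-(μ - 1) ^ 2 / 3) + Real.exp (-(μ + 1) ^ 2 / 3)
          = 2 * Real.exp (-(μ ^ 2 + 1) / 3) * Real.cosh (2 * μ / 3) := by
        rw [Real.cosh_eq,
          show -(μ - 1) ^ 2 / 3 = -(μ ^ 2 + 1) / 3 + 2 * μ / 3 by ring,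
          show -(μ + 1) ^ 2 / 3 = -(μ ^ 2 + 1) / 3 + -(2 * μ / 3) by ring,
          Real.exp_add, Real.exp_add]
        ring
      have hcosh : Real.cosh (2 * μ / 3) ≤ Real.exp (μ ^ 2 / 3) := by
        refine (Real.cosh_le_exp_half_sq _).trans (Real.exp_le_exp.2 ?_)
        nlinarith [sq_nonneg μ]
      calc Real.exp (-(μ - 1) ^ 2 / 3) + Real.exp (-(μ + 1) ^ 2 / 3)
          = 2 * Real.exp (-(μ ^ 2 + 1) / 3) * Real.cosh (2 * μ / 3) := hsplit
        _ ≤ 2 * Real.exp (-(μ ^ 2 + 1) / 3) * Real.exp (μ ^ 2 / 3) := by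
            have := (Real.exp_pos (-(μ ^ 2 + 1) / 3)).le
            nlinarith
        _ = 2 * Real.exp (-(1/3)) := by
            rw [mul_assoc, ← Real.exp_add]
            congr 2
            ring
        _ = Real.exp (-((0:ℝ) - 1) ^ 2 / 3) + Real.exp (-((0:ℝ) + 1) ^ 2 / 3) := by
            norm_num
            ring
    have hpos : (0:ℝ) < 1 / (2 * Real.sqrt Real.pi) * (Real.sqrt 3)⁻¹ := by positivity
    calc 1 / (2 * Real.sqrt Real.pi) * ((Real.sqrt 3)⁻¹
          * (Real.exp (-(μ - 1) ^ 2 / 3) + Real.exp (-(μ + 1) ^ 2 / 3)))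
        = 1 / (2 * Real.sqrt Real.pi) * (Real.sqrt 3)⁻¹
          * (Real.exp (-(μ - 1) ^ 2 / 3) + Real.exp (-(μ + 1) ^ 2 / 3)) := by ring
      _ ≤ 1 / (2 * Real.sqrt Real.pi) * (Real.sqrt 3)⁻¹
          * (Real.exp (-((0:ℝ) - 1) ^ 2 / 3) + Real.exp (-((0:ℝ) + 1) ^ 2 / 3)) := by
          exact mul_le_mul_of_nonneg_left key hpos.le
      _ = 1 / (2 * Real.sqrt Real.pi) * ((Real.sqrt 3)⁻¹
          * (Real.exp (-((0:ℝ) - 1) ^ 2 / 3) + Real.exp (-((0:ℝ) + 1) ^ 2 / 3))) := by ring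
  -- numerics
  have hsqrt3pi_lt : Real.sqrt (3 * Real.pi) < 3.071 := by
    rw [show (3.071:ℝ) = Real.sqrt (3.071 ^ 2) by rw [Real.sqrt_sq]; norm_num]
    apply Real.sqrt_lt_sqrt (by positivity)
    nlinarith [Real.pi_lt_d6]
  have hsqrt3pi_pos : (0:ℝ) < Real.sqrt (3 * Real.pi) := Real.sqrt_pos.2 (by positivity)
  have hexp13 : Real.exp (1/3 : ℝ) < 1.3958 := by
    have h3 : Real.exp (1/3 : ℝ) ^ 3 = Real.exp 1 := by
      rw [← Real.exp_nat_mul]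
      norm_num
    by_contra hcon
    push_neg at hcon
    have hp : (1.3958:ℝ) ^ 3 ≤ Real.exp (1/3 : ℝ) ^ 3 :=
      pow_le_pow_left₀ (by norm_num) hcon 3
    rw [h3] at hp
    nlinarith [Real.exp_one_lt_d9]
  have hexp13_pos : (0:ℝ) < Real.exp (1/3 : ℝ) := Real.exp_pos _
  have hgt : (0.23 : ℝ) < 1 / Real.sqrt (3 * Real.pi) * Real.exp (-(1 / 3)) := by
    have hx : (0:ℝ) < Real.sqrt (3 * Real.pi) * Real.exp (1/3 : ℝ) := by positivity
    rw [Real.exp_neg, one_div, ← mul_inv, ← one_div, lt_div_iff₀ hx]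
    nlinarith [hsqrt3pi_lt, hexp13, hsqrt3pi_pos, hexp13_pos]
  have hbump0 : twoBump 0 = 1 / Real.sqrt Real.pi * Real.exp (-1) := by
    simp only [twoBump]
    norm_num
    ring
  have hsqrtpi_gt : (1.77:ℝ) < Real.sqrt Real.pi := by
    rw [show (1.77:ℝ) = Real.sqrt (1.77 ^ 2) by rw [Real.sqrt_sq]; norm_num]
    apply Real.sqrt_lt_sqrt (by positivity)
    nlinarith [Real.pi_gt_d6]
  have hlt : twoBump 0 < (0.21 : ℝ) := by
    have hx : (0:ℝ) < Real.sqrt Real.pi * Real.exp 1 := by positivity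
    rw [hbump0, Real.exp_neg, one_div, ← mul_inv, ← one_div, div_lt_iff₀ hx]
    nlinarith [Real.exp_one_gt_d9, hsqrtpi_gt, Real.exp_pos 1]
  refine ⟨hopt, hval, hgt, hbump0, hlt, ?_⟩
  rw [hval]
  linarith
end
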